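/- Assume f \in C^1([0,\infty)). Let u be a positive solution of the one-dimensional problem (1) and let w be a solution of the linearized problem (4). Then the function x \mapsto (\varphi_p(u'))'(x)\,w(x) - \varphi_p'(u'(x))\,u'(x)\,w'(x) is constant on [-1,1]. -/

import Mathlib

/-!
Replacing `(φ_p(u'))'` by `-λ f(u)` and `φ_p'(u') u'` by `(p - 1) φ_p(u')` turns the quantity into
`W = -λ f(u) w - (p - 1) φ_p(u') w'`, which is continuous on `[-1, 1]`. Where `u' ≠ 0`, the
identity `u' = φ_{p'}(φ_p(u'))` with `p' = p / (p - 1)` makes `u'` differentiable, and the two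
equations give `W' = 0`. Where `u' = 0` and `λ f(u) = 0`, the factor `φ_p(u')` of the last term
vanishes to first order, so again `W' = 0`. The remaining points are zeros of `φ_p(u')` with
nonzero derivative `-λ f(u)`, hence isolated and countably many, and a continuous function whose
derivative vanishes off a countable set is constant.
-/

open Set

/-- `φ_p(t) = t |t|^{p-2}` (real exponent), with `φ_p(0)=0`. -/
noncomputable def phi (p t : ℝ) : ℝ := t * |t| ^ (p - 2)

/-- `φ_p'(t) = (p-1) |t|^{p-2}`. -/
noncomputable def phi' (p t : ℝ) : ℝ := (p - 1) * |t| ^ (p - 2)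

/-- The derivative of a function on `[-1,1]` (one-sided at the endpoints). -/
noncomputable def du (u : ℝ → ℝ) : ℝ → ℝ := derivWithin u (Set.Icc (-1) 1)

/-- A positive (classical) solution of the one-dimensional problem (1):
`(φ_p(u'))' + λ f(u) = 0` on `(-1,1)`, `u(-1) = u(1) = 0`,
with `u ∈ C^1[-1,1]`, `φ_p ∘ u' ∈ C^1((-1,1))`, and `u > 0` on `(-1,1)`. -/
structure Sol1D (p lam : ℝ) (f : ℝ → ℝ) (u : ℝ → ℝ) : Prop where
  reg : ContDiffOn ℝ 1 u (Set.Icc (-1) 1)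
  reg' : ContDiffOn ℝ 1 (fun x => phi p (du u x)) (Set.Ioo (-1) 1)
  pos : ∀ x ∈ Set.Ioo (-1:ℝ) 1, 0 < u x
  bcm : u (-1) = 0
  bc1 : u 1 = 0
  ode : ∀ x ∈ Set.Ioo (-1:ℝ) 1,
    deriv (fun y => phi p (du u y)) x + lam * f (u x) = 0

/-- A solution of the linearized problem (4) at `u`:
`(φ_p'(u') w')' + λ f'(u) w = 0` on `(-1,1)`, `w(-1) = w(1) = 0`. -/
structure Lin1D (p lam : ℝ) (f : ℝ → ℝ) (u w : ℝ → ℝ) : Prop where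
  reg : ContDiffOn ℝ 1 w (Set.Icc (-1) 1)
  reg' : ContDiffOn ℝ 1 (fun x => phi' p (du u x) * du w x) (Set.Ioo (-1) 1)
  ode : ∀ x ∈ Set.Ioo (-1:ℝ) 1,
    deriv (fun y => phi' p (du u y) * du w y) x + lam * deriv f (u x) * w x = 0
  bcm : w (-1) = 0
  bc1 : w 1 = 0

open Filter Topology

theorem phi'_mul_self (p t : ℝ) : phi' p t * t = (p - 1) * phi p t := by
  unfold phi phi'; ring

theorem phi_ne_zero {p t : ℝ} (ht : t ≠ 0) : phi p t ≠ 0 :=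
  mul_ne_zero ht (Real.rpow_pos_of_pos (abs_pos.2 ht) _).ne'

theorem abs_phi {p : ℝ} (hp : p ≠ 1) (t : ℝ) : |phi p t| = |t| ^ (p - 1) := by
  rcases eq_or_ne t 0 with rfl | ht
  · simp [phi, Real.zero_rpow (sub_ne_zero.2 hp)]
  · rw [phi, abs_mul, abs_of_nonneg (Real.rpow_nonneg (abs_nonneg t) _),
      show p - 1 = 1 + (p - 2) by ring, Real.rpow_add (abs_pos.2 ht), Real.rpow_one]

theorem phi_conj_phi {p : ℝ} (hp : p ≠ 1) (t : ℝ) : phi (p / (p - 1)) (phi p t) = t := by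
  rcases eq_or_ne t 0 with rfl | ht
  · simp [phi]
  have hp1 : p - 1 ≠ 0 := sub_ne_zero.2 hp
  rw [phi, abs_phi hp, ← Real.rpow_mul (abs_nonneg t), phi, mul_assoc,
    ← Real.rpow_add (abs_pos.2 ht),
    show p - 2 + (p - 1) * (p / (p - 1) - 2) = 0 by field_simp; ring, Real.rpow_zero, mul_one]

theorem phi'_conj_phi_mul_phi' {p t : ℝ} (hp : p ≠ 1) (ht : t ≠ 0) :
    phi' (p / (p - 1)) (phi p t) * phi' p t = 1 := by
  have hp1 : p - 1 ≠ 0 := sub_ne_zero.2 hp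
  rw [phi', phi', abs_phi hp, ← Real.rpow_mul (abs_nonneg t), mul_mul_mul_comm,
    ← Real.rpow_add (abs_pos.2 ht),
    show (p - 1) * (p / (p - 1) - 2) + (p - 2) = 0 by field_simp; ring, Real.rpow_zero]
  field_simp
  ring

theorem hasDerivAt_phi (q : ℝ) {t : ℝ} (ht : t ≠ 0) : HasDerivAt (phi q) (phi' q t) t := by
  rcases ht.lt_or_gt with hneg | hpos
  · have hev : (fun s : ℝ => -(-s) ^ (q - 1)) =ᶠ[𝓝 t] phi q := by
      filter_upwards [Iio_mem_nhds hneg] with s hs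
      rw [phi, abs_of_neg hs, show q - 1 = 1 + (q - 2) by ring,
        Real.rpow_add (neg_pos.2 hs), Real.rpow_one]
      ring
    have h := ((Real.hasDerivAt_rpow_const (p := q - 1) (Or.inl (neg_pos.2 hneg).ne')).comp t
      (hasDerivAt_neg t)).neg
    refine (h.congr_of_eventuallyEq hev.symm).congr_deriv ?_
    rw [phi', abs_of_neg hneg]
    ring_nf
  · have hev : (fun s : ℝ => s ^ (q - 1)) =ᶠ[𝓝 t] phi q := by
      filter_upwards [Ioi_mem_nhds hpos] with s hs
      rw [phi, abs_of_pos hs, show q - 1 = 1 + (q - 2) by ring, Real.rpow_add hs, Real.rpow_one]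
    refine ((Real.hasDerivAt_rpow_const (Or.inl hpos.ne')).congr_of_eventuallyEq
      hev.symm).congr_deriv ?_
    rw [phi', abs_of_pos hpos]
    ring_nf

theorem continuous_phi {p : ℝ} (hp : 1 < p) : Continuous (phi p) := by
  refine continuous_iff_continuousAt.2 fun t => ?_
  rcases eq_or_ne t 0 with rfl | ht
  · have h : Tendsto (fun s : ℝ => |s| ^ (p - 1)) (𝓝 0) (𝓝 0) := by
      simpa [Real.zero_rpow (sub_pos.2 hp).ne'] using
        (continuous_abs.tendsto 0).rpow_const (Or.inr (sub_pos.2 hp).le)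
    have h0 : phi p 0 = 0 := by simp [phi]
    rw [ContinuousAt, h0]
    exact squeeze_zero_norm (fun s => (abs_phi hp.ne' s).le) h
  · exact (hasDerivAt_phi p ht).continuousAt

theorem HasDerivAt.mul_continuousAt_of_eq_zero {Q R : ℝ → ℝ} {x q : ℝ} (hQ : HasDerivAt Q q x)
    (hQ0 : Q x = 0) (hR : ContinuousAt R x) :
    HasDerivAt (fun y => Q y * R y) (q * R x) x := by
  rw [hasDerivAt_iff_tendsto_slope] at hQ ⊢
  refine (hQ.mul (hR.tendsto.mono_left nhdsWithin_le_nhds)).congr' ?_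
  filter_upwards [self_mem_nhdsWithin] with y hy
  simp only [slope_def_field, hQ0, zero_mul, sub_zero]
  ring

theorem countable_setOf_eq_of_hasDerivAt_ne_zero {F : Type*} [NormedAddCommGroup F]
    [NormedSpace ℝ F] (g : ℝ → F) (c : F) :
    {x | g x = c ∧ ∃ g' ≠ 0, HasDerivAt g g' x}.Countable := by
  refine (HereditarilyLindelofSpace.isLindelof _).countable_of_isDiscrete
    (isDiscrete_iff_nhdsNE.2 fun x ⟨_, g', hg', hx⟩ => ?_)
  rw [inf_principal_eq_bot]
  filter_upwards [hx.eventually_ne (c := c) hg'] with y hy hys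
  exact hy hys.1

theorem constant_of_hasDerivAt_zero_off_countable {E : Type*} [NormedAddCommGroup E]
    [NormedSpace ℝ E] [CompleteSpace E] {G : ℝ → E} {a b : ℝ} {s : Set ℝ} (hs : s.Countable)
    (hc : ContinuousOn G (Icc a b)) (hd : ∀ x ∈ Ioo a b \ s, HasDerivAt G 0 x) :
    ∀ x ∈ Icc a b, G x = G a := by
  intro x hx
  have h := MeasureTheory.integral_eq_of_hasDerivAt_off_countable_of_le G 0 hx.1 hs
    (hc.mono (Icc_subset_Icc_right hx.2))
    (fun y hy => hd y ⟨⟨hy.1.1, hy.1.2.trans_le hx.2⟩, hy.2⟩) intervalIntegrable_const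
  simp only [Pi.zero_apply, intervalIntegral.integral_zero] at h
  exact sub_eq_zero.1 h.symm

section Wronskian

variable {p lam : ℝ} {f u w : ℝ → ℝ}

theorem hasDerivAt_du {v : ℝ → ℝ} (hv : ContDiffOn ℝ 1 v (Icc (-1) 1)) {x : ℝ}
    (hx : x ∈ Ioo (-1 : ℝ) 1) : HasDerivAt v (du v x) x :=
  ((hv.differentiableOn one_ne_zero) x (Ioo_subset_Icc_self hx)).hasDerivWithinAt.hasDerivAt
    (Icc_mem_nhds hx.1 hx.2)

theorem continuousOn_du {v : ℝ → ℝ} (hv : ContDiffOn ℝ 1 v (Icc (-1) 1)) :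
    ContinuousOn (du v) (Icc (-1) 1) :=
  hv.continuousOn_derivWithin (uniqueDiffOn_Icc (by norm_num)) le_rfl

theorem eq_neg_one_or_eq_one_of_mem_Icc {x : ℝ} (hx : x ∈ Icc (-1 : ℝ) 1)
    (hxI : x ∉ Ioo (-1 : ℝ) 1) : x = -1 ∨ x = 1 := by
  have h : x ∈ Icc (-1 : ℝ) 1 \ Ioo (-1) 1 := ⟨hx, hxI⟩
  rwa [Icc_sdiff_Ioo_same (by norm_num)] at h

theorem Sol1D.nonneg (hu : Sol1D p lam f u) {x : ℝ} (hx : x ∈ Icc (-1 : ℝ) 1) : 0 ≤ u x := by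
  by_cases hxI : x ∈ Ioo (-1 : ℝ) 1
  · exact (hu.pos x hxI).le
  · rcases eq_neg_one_or_eq_one_of_mem_Icc hx hxI with rfl | rfl
    exacts [hu.bcm.ge, hu.bc1.ge]

theorem Sol1D.hasDerivAt_phi_du (hu : Sol1D p lam f u) {x : ℝ} (hx : x ∈ Ioo (-1 : ℝ) 1) :
    HasDerivAt (fun y => phi p (du u y)) (-(lam * f (u x))) x :=
  ((hu.reg'.differentiableOn one_ne_zero x hx).differentiableAt
    (isOpen_Ioo.mem_nhds hx)).hasDerivAt.congr_deriv (by linarith [hu.ode x hx])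

theorem Lin1D.hasDerivAt_flux (hw : Lin1D p lam f u w) {x : ℝ} (hx : x ∈ Ioo (-1 : ℝ) 1) :
    HasDerivAt (fun y => phi' p (du u y) * du w y) (-(lam * deriv f (u x) * w x)) x :=
  ((hw.reg'.differentiableOn one_ne_zero x hx).differentiableAt
    (isOpen_Ioo.mem_nhds hx)).hasDerivAt.congr_deriv (by linarith [hw.ode x hx])

noncomputable def wronskian (p lam : ℝ) (f u w : ℝ → ℝ) (x : ℝ) : ℝ :=
  -(lam * f (u x) * w x) - (p - 1) * (phi p (du u x) * du w x)

theorem wronskian_eq (hu : Sol1D p lam f u) (hw : Lin1D p lam f u w) {x : ℝ}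
    (hx : x ∈ Icc (-1 : ℝ) 1) :
    derivWithin (fun z => phi p (du u z)) (Icc (-1) 1) x * w x
      - phi' p (du u x) * du u x * du w x = wronskian p lam f u w x := by
  rw [wronskian, phi'_mul_self]
  by_cases hxI : x ∈ Ioo (-1 : ℝ) 1
  · rw [(hu.hasDerivAt_phi_du hxI).hasDerivWithinAt.derivWithin
      (uniqueDiffOn_Icc (by norm_num) x hx)]
    ring
  · rcases eq_neg_one_or_eq_one_of_mem_Icc hx hxI with rfl | rfl
    · rw [hw.bcm]; ring
    · rw [hw.bc1]; ring

theorem continuousOn_wronskian (hp : 1 < p) (hf : ContinuousOn f (Ici 0))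
    (hu : Sol1D p lam f u) (hw : Lin1D p lam f u w) :
    ContinuousOn (wronskian p lam f u w) (Icc (-1) 1) :=
  ((continuousOn_const.mul (hf.comp hu.reg.continuousOn fun _ hx => hu.nonneg hx)).mul
    hw.reg.continuousOn).neg.sub (continuousOn_const.mul
      (((continuous_phi hp).comp_continuousOn (continuousOn_du hu.reg)).mul
        (continuousOn_du hw.reg)))

theorem hasDerivAt_wronskian_of_du_ne_zero (hp : p ≠ 1) (hu : Sol1D p lam f u)
    (hw : Lin1D p lam f u w) {x : ℝ} (hx : x ∈ Ioo (-1 : ℝ) 1)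
    (hfx : DifferentiableAt ℝ f (u x)) (h0 : du u x ≠ 0) :
    HasDerivAt (wronskian p lam f u w) 0 x := by
  have hG : wronskian p lam f u w = fun y => -(lam * f (u y) * w y)
      - phi' p (du u y) * du w y * phi (p / (p - 1)) (phi p (du u y)) := by
    funext y
    rw [wronskian, phi_conj_phi hp, mul_right_comm (phi' p _), phi'_mul_self]
    ring
  have hsrc := ((hfx.hasDerivAt.comp x (hasDerivAt_du hu.reg hx)).const_mul lam).mul
    (hasDerivAt_du hw.reg hx)
  have hdu := (hasDerivAt_phi (p / (p - 1)) (phi_ne_zero h0)).comp x (hu.hasDerivAt_phi_du hx)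
  simp only [Function.comp_def] at hsrc hdu
  rw [hG]
  refine (hsrc.neg.sub ((hw.hasDerivAt_flux hx).mul hdu)).congr_deriv ?_
  linear_combination (lam * deriv f (u x) * w x) * phi_conj_phi hp (du u x)
    + (lam * f (u x) * du w x) * phi'_conj_phi_mul_phi' hp h0

theorem hasDerivAt_wronskian_of_du_eq_zero (hu : Sol1D p lam f u) (hw : Lin1D p lam f u w)
    {x : ℝ} (hx : x ∈ Ioo (-1 : ℝ) 1) (hfx : DifferentiableAt ℝ f (u x)) (h0 : du u x = 0)
    (hf0 : lam * f (u x) = 0) : HasDerivAt (wronskian p lam f u w) 0 x := by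
  have hsrc := ((hfx.hasDerivAt.comp x (hasDerivAt_du hu.reg hx)).const_mul lam).mul
    (hasDerivAt_du hw.reg hx)
  have hflux := (hu.hasDerivAt_phi_du hx).mul_continuousAt_of_eq_zero (by simp [h0, phi])
    ((continuousOn_du hw.reg).continuousAt (Icc_mem_nhds hx.1 hx.2))
  exact (hsrc.neg.sub (hflux.const_mul (p - 1))).congr_deriv (by simp [h0, hf0])

end Wronskian

theorem stmt13_general (p : ℝ) (hp : 1 < p) (lam : ℝ)
    (f : ℝ → ℝ) (hf : ContDiffOn ℝ 1 f (Set.Ici 0))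
    (u : ℝ → ℝ) (hu : Sol1D p lam f u)
    (w : ℝ → ℝ) (hw : Lin1D p lam f u w) :
    ∀ x ∈ Set.Icc (-1:ℝ) 1, ∀ y ∈ Set.Icc (-1:ℝ) 1,
      derivWithin (fun z => phi p (du u z)) (Set.Icc (-1) 1) x * w x
          - phi' p (du u x) * du u x * du w x
        = derivWithin (fun z => phi p (du u z)) (Set.Icc (-1) 1) y * w y
          - phi' p (du u y) * du u y * du w y := by
  have hfu : ∀ x ∈ Ioo (-1 : ℝ) 1, DifferentiableAt ℝ f (u x) := fun x hx =>
    (hf.differentiableOn one_ne_zero).differentiableAt (Ici_mem_nhds (hu.pos x hx))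
  have hB : {x ∈ Ioo (-1 : ℝ) 1 | du u x = 0 ∧ lam * f (u x) ≠ 0}.Countable :=
    (countable_setOf_eq_of_hasDerivAt_ne_zero (fun y => phi p (du u y)) 0).mono <| by
      rintro x ⟨hx, h0, hf0⟩
      exact ⟨by simp [h0, phi], _, neg_ne_zero.2 hf0, hu.hasDerivAt_phi_du hx⟩
  have hG : ∀ x ∈ Icc (-1 : ℝ) 1, wronskian p lam f u w x = wronskian p lam f u w (-1) := by
    refine constant_of_hasDerivAt_zero_off_countable hB
      (continuousOn_wronskian hp hf.continuousOn hu hw) fun x ⟨hx, hxB⟩ => ?_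
    by_cases h0 : du u x = 0
    · exact hasDerivAt_wronskian_of_du_eq_zero hu hw hx (hfu x hx) h0
        (not_not.1 fun h => hxB ⟨hx, h0, h⟩)
    · exact hasDerivAt_wronskian_of_du_ne_zero hp.ne' hu hw hx (hfu x hx) h0
  intro x hx y hy
  rw [wronskian_eq hu hw hx, wronskian_eq hu hw hy, hG x hx, hG y hy]

/-- Lemma 3.3: the Wronskian-type quantity
`(φ_p(u'))' w - φ_p'(u') u' w'` is constant on `[-1,1]`. -/
theorem stmt13 (p : ℝ) (hp : 1 < p) (lam : ℝ) (hlam : 0 < lam)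
    (f : ℝ → ℝ) (hf : ContDiffOn ℝ 1 f (Set.Ici 0))
    (u : ℝ → ℝ) (hu : Sol1D p lam f u)
    (w : ℝ → ℝ) (hw : Lin1D p lam f u w) :
    ∀ x ∈ Set.Icc (-1:ℝ) 1, ∀ y ∈ Set.Icc (-1:ℝ) 1,
      derivWithin (fun z => phi p (du u z)) (Set.Icc (-1) 1) x * w x
          - phi' p (du u x) * du u x * du w x
        = derivWithin (fun z => phi p (du u z)) (Set.Icc (-1) 1) y * w y
          - phi' p (du u y) * du u y * du w y :=
  stmt13_general p hp lam f hf u hu w hw
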